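/- Fix d ≥ 2 and M > 0. For each j ∈ {1,...,d-1} define weights w_j ∈ R^d by w_{jj} = 2M, w_{jd} = -2M, and w_{ji} = 0 otherwise. Then for every x ∈ R^d with ‖x‖_∞ ≤ M, the tropical embedding neuron satisfies max_i(x_i + w_{ji}) - min_i(x_i + w_{ji}) = x_j - x_d + 4M. -/

import Mathlib

open Filter Topology

noncomputable def tsup {d : ℕ} [NeZero d] (f : Fin d → ℝ) : ℝ :=
  Finset.univ.sup' Finset.univ_nonempty f

noncomputable def tinf {d : ℕ} [NeZero d] (f : Fin d → ℝ) : ℝ :=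
  Finset.univ.inf' Finset.univ_nonempty f

noncomputable def dtr {d : ℕ} [NeZero d] (v w : Fin d → ℝ) : ℝ :=
  tsup (fun i => v i - w i) - tinf (fun i => v i - w i)

theorem trop_embed_coordinate_difference (d : ℕ) [NeZero d] (hd : 2 ≤ d)
    (M : ℝ) (hM : 0 < M) (j : Fin d) (hj : (j : ℕ) ≠ d - 1)
    (x : Fin d → ℝ) (hx : ∀ i : Fin d, |x i| ≤ M) :
    tsup (fun i => x i + (if i = j then 2*M else if (i : ℕ) = d - 1 then -(2*M) else 0))
      - tinf (fun i => x i + (if i = j then 2*M else if (i : ℕ) = d - 1 then -(2*M) else 0))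
      = x j - x ⟨d - 1, by omega⟩ + 4*M := by
  set e : Fin d → ℝ :=
    fun i => x i + (if i = j then 2*M else if (i : ℕ) = d - 1 then -(2*M) else 0) with he
  set k : Fin d := ⟨d - 1, by omega⟩ with hk
  have hkj : k ≠ j := by
    intro h
    exact hj (by rw [← h])
  have hxb : ∀ i : Fin d, -M ≤ x i ∧ x i ≤ M := fun i => abs_le.mp (hx i)
  have hej : e j = x j + 2*M := by simp [he]
  have hek : e k = x k - 2*M := by
    simp only [he]
    rw [if_neg hkj]; norm_num
    rw [if_pos (show (k : ℕ) = d - 1 from rfl)]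
    ring
  have hsup : tsup e = x j + 2*M := by
    apply le_antisymm
    · apply Finset.sup'_le
      intro i _
      by_cases hij : i = j
      · subst hij; rw [hej]
      · by_cases hik : (i : ℕ) = d - 1
        · have : i = k := Fin.ext hik
          subst this
          rw [hek]
          have h1 := (hxb k).2
          have h2 := (hxb j).1
          linarith
        · simp only [he, if_neg hij, if_neg hik]
          have h1 := (hxb i).2
          have h2 := (hxb j).1
          linarith
    · rw [← hej]; exact Finset.le_sup' e (Finset.mem_univ j)
  have hinf : tinf e = x k - 2*M := by
    apply le_antisymm
    · rw [← hek]; exact Finset.inf'_le e (Finset.mem_univ k)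
    · apply Finset.le_inf'
      intro i _
      by_cases hij : i = j
      · rw [hij, hej]
        have h1 := (hxb k).2
        have h2 := (hxb j).1
        linarith
      · by_cases hik : (i : ℕ) = d - 1
        · have : i = k := Fin.ext hik
          subst this; rw [hek]
        · simp only [he, if_neg hij, if_neg hik]
          have h1 := (hxb i).1
          have h2 := (hxb k).2
          linarith
  rw [hsup, hinf]
  ring
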